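/- arXiv:1902.09620 — 2 statements merged into one kernel-verified Lean document; each statement's English description precedes it below -/
import Mathlib

section
/- Let F be a field with char(F) ≠ 2 and G a non-abelian group with involution * extended to FG. If FG is normal, then the involution * fixes exactly the central elements of G: g* = g if and only if g ∈ ζ(G). -/
/-!
Normality of `FG` applied to `g + h` forces the cross terms to agree,
`g h* + h g* = g* h + h* g`; as `2 ≠ 0` in `F`, the group elements on the two sides coincide in
one of the two possible matchings. That dichotomy, for well-chosen pairs, shows that two
symmetric elements commute, hence that symmetric elements are central. Conversely, a central
`g` with `g* ≠ g` would make every `b*`, that is every element of `G`, commute with everything.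
-/

/-- The F-linear extension of a group involution `st` to the group algebra. -/
noncomputable def invMap {F G : Type*} [Field F] [Group G] (st : G → G) :
    MonoidAlgebra F G → MonoidAlgebra F G :=
  fun α => MonoidAlgebra.ofCoeff (Finsupp.mapDomain st α.coeff)

lemma mul_map_add_mul_map_eq {R : Type*} [Ring R] (s : R → R)
    (hs_add : ∀ a b, s (a + b) = s a + s b) (hs : ∀ a, a * s a = s a * a) (a b : R) :
    a * s b + b * s a = s a * b + s b * a := by
  have hab := hs (a + b)
  simp only [hs_add, add_mul, mul_add, hs a, hs b] at hab
  rw [← sub_eq_zero] at hab ⊢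
  rw [← hab]
  abel

section GroupAlgebra

variable {F G : Type*} [Field F] [Group G] {st : G → G}

lemma invMap_eq_mapDomain : invMap (F := F) st = MonoidAlgebra.mapDomain st := rfl

lemma invMap_add (α β : MonoidAlgebra F G) :
    invMap st (α + β) = invMap st α + invMap st β := by
  simp only [invMap_eq_mapDomain, MonoidAlgebra.mapDomain_add]

lemma invMap_single (g : G) (r : F) :
    invMap st (MonoidAlgebra.single g r) = MonoidAlgebra.single (st g) r := by
  rw [invMap_eq_mapDomain, MonoidAlgebra.mapDomain_single]

lemma mul_st_dichotomy_of_normal (h2 : (2 : F) ≠ 0)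
    (hnormal : ∀ α : MonoidAlgebra F G, α * invMap st α = invMap st α * α) (g h : G) :
    (g * st h = st g * h ∧ h * st g = st h * g) ∨
      (g * st h = st h * g ∧ h * st g = st g * h) := by
  have hcross := mul_map_add_mul_map_eq (invMap st) invMap_add hnormal
    (MonoidAlgebra.single g (1 : F)) (MonoidAlgebra.single h 1)
  simp only [invMap_single, MonoidAlgebra.single_mul_single, one_mul] at hcross
  rcases (MonoidAlgebra.single_add_single_inj one_ne_zero one_ne_zero).1 hcross with
    hsame | ⟨-, hswap⟩ | ⟨htwo, -⟩
  · exact .inl hsame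
  · exact .inr hswap
  · exact absurd (one_add_one_eq_two.symm.trans htwo) h2

end GroupAlgebra

section Group

variable {G : Type*} [Group G] {st : G → G}
  (hd : ∀ g h : G, (g * st h = st g * h ∧ h * st g = st h * g) ∨
    (g * st h = st h * g ∧ h * st g = st g * h))
include hd

lemma mul_comm_of_st_eq_self (hanti : ∀ g h : G, st (g * h) = st h * st g) {g h : G}
    (hg : st g = g) (hh : st h = h) : g * h = h * g := by
  have hgh : st (g * h) = h * g := by rw [hanti, hg, hh]
  rcases hd g (g * h) with ⟨hleft, -⟩ | ⟨hright, -⟩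
  · rw [hgh, hg] at hleft
    exact (mul_left_cancel hleft).symm
  · rw [hgh, ← mul_assoc] at hright
    exact mul_right_cancel hright

lemma mem_center_of_st_eq_self (hanti : ∀ g h : G, st (g * h) = st h * st g) {g : G}
    (hg : st g = g) : g ∈ Subgroup.center G := by
  refine Subgroup.mem_center_iff.2 fun h => ?_
  rcases hd g h with ⟨hleft, -⟩ | ⟨-, hright⟩
  · rw [hg] at hleft
    exact (mul_comm_of_st_eq_self hd hanti (mul_left_cancel hleft) hg)
  · rwa [hg] at hright

lemma mul_st_comm_of_mem_center (hanti : ∀ g h : G, st (g * h) = st h * st g) {g : G}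
    (hg : g ∈ Subgroup.center G) (hne : st g ≠ g) (a b : G) : a * st b = st b * a := by
  have hcomm : ∀ x, x * g = g * x := Subgroup.mem_center_iff.1 hg
  rcases hd a b with ⟨hab, -⟩ | ⟨hab, -⟩
  · rcases hd (g * a) b with ⟨hgab, -⟩ | ⟨hgab, -⟩
    · -- `g a b* = (g a)* b` and `a b* = a* b` with `g` central give `g = g*`
      refine absurd (mul_right_cancel (b := b) (mul_left_cancel (a := st a) ?_)) hne
      calc st a * (st g * b) = st (g * a) * b := by rw [hanti, mul_assoc]
        _ = g * (a * st b) := by rw [← hgab, mul_assoc]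
        _ = st a * (g * b) := by rw [hab, ← mul_assoc, ← hcomm (st a), mul_assoc]
    · refine mul_left_cancel (a := g) ?_
      calc g * (a * st b) = st b * (g * a) := by rw [← mul_assoc, hgab]
        _ = g * (st b * a) := by rw [← mul_assoc, hcomm (st b), mul_assoc]
  · exact hab

end Group

theorem stmt_4 {F G : Type*} [Field F] [Group G] (h2 : (2 : F) ≠ 0)
    (hna : ∃ g h : G, g * h ≠ h * g)
    (st : G → G) (hanti : ∀ g h : G, st (g * h) = st h * st g)
    (hinvol : ∀ g : G, st (st g) = g)
    (hnormal : ∀ α : MonoidAlgebra F G, α * invMap st α = invMap st α * α) :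
    ∀ g : G, st g = g ↔ g ∈ Subgroup.center G := by
  have hd := mul_st_dichotomy_of_normal h2 hnormal
  refine fun g => ⟨mem_center_of_st_eq_self hd hanti, fun hg => ?_⟩
  by_contra hne
  obtain ⟨x, y, hxy⟩ := hna
  apply hxy
  simpa only [hinvol] using mul_st_comm_of_mem_center hd hanti hg hne x (st y)
end

section
/- Let F be a field with char(F) ≠ 2, G a group with non-trivial orientation σ and involution *, N = ker(σ). If FG is normal with respect to the oriented involution ⊛, then every element of N⁺ = {n ∈ N : n* = n} is central in G. -/
/-! Normality evaluated at `n + x` with `σ x = -1` shows that `n` commutes with every element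
outside `N`; as `σ` is non-trivial, every element of `N` is a product of two such elements. -/

/-- The oriented involution on the group algebra: `(Σ α_g g)⊛ = Σ α_g σ(g) g*`. -/
noncomputable def oinvMap {F G : Type*} [Field F] [Group G] (st : G → G) (σ : G → F) :
    MonoidAlgebra F G → MonoidAlgebra F G :=
  fun α => Finsupp.sum α.coeff fun g c => MonoidAlgebra.single (st g) (σ g * c)

open MonoidAlgebra

section OrientedInvolution

variable {F G : Type*} [Field F] [Group G] {st : G → G} {σ : G → F}

theorem oinvMap_single (g : G) (c : F) :
    oinvMap st σ (single g c) = single (st g) (σ g * c) := by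
  rw [oinvMap, coeff_single, Finsupp.sum_single_index (by simp)]

theorem oinvMap_add (α β : MonoidAlgebra F G) :
    oinvMap st σ (α + β) = oinvMap st σ α + oinvMap st σ β := by
  rw [oinvMap, coeff_add]
  exact Finsupp.sum_add_index' (by simp) fun _ _ _ => by rw [mul_add, single_add]

theorem map_star_eq_neg_one (hhom : ∀ g h : G, σ (g * h) = σ g * σ h)
    (hker : ∀ g : G, σ (g * st g) = 1) {x : G} (hx : σ x = -1) : σ (st x) = -1 := by
  have h := hker x
  rw [hhom, hx] at h
  linear_combination -h

/-- Normality applied to `n + x`: comparing the coefficients of `x n` on both sides of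
`(n + x)(n - x*) = (n - x*)(n + x)` leaves only these two possibilities. -/
theorem mul_eq_mul_or_mul_eq_mul_star_of_normal (h2 : (2 : F) ≠ 0)
    (hhom : ∀ g h : G, σ (g * h) = σ g * σ h) (hker : ∀ g : G, σ (g * st g) = 1)
    (hnormal : ∀ α : MonoidAlgebra F G, α * oinvMap st σ α = oinvMap st σ α * α)
    {n x : G} (hn : σ n = 1) (hsn : st n = n) (hx : σ x = -1) :
    x * n = n * x ∨ x * n = n * st x := by
  by_contra! ⟨hnx, hnx'⟩
  have h1 : (1 : F) ≠ -1 := fun h => h2 (by linear_combination h)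
  have hsx := map_star_eq_neg_one hhom hker hx
  have hnn : n * n ≠ x * n := fun h => h1 (by rw [← hx, ← mul_right_cancel h, hn])
  have hxsx : x * st x ≠ x * n := fun h => h1 (by rw [← hsx, mul_left_cancel h, hn])
  have hsxx : st x * x ≠ x * n := fun h => h1 (by
    have := congrArg σ h
    rw [hhom, hhom, hsx, hx, hn] at this
    linear_combination this)
  have key := congrArg (fun α => α.coeff (x * n)) (hnormal (single n 1 + single x 1))
  classical
  simp only [oinvMap_add, oinvMap_single, hn, hsn, hx, add_mul, mul_add, single_mul_single,
    coeff_add, coeff_single, Finsupp.add_apply, Finsupp.single_apply, if_neg hnn, if_neg hxsx,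
    if_neg hsxx, if_neg (Ne.symm hnx), if_neg (Ne.symm hnx'), if_true] at key
  split_ifs at key
  · exact h1 (by linear_combination key)
  · norm_num at key

/-- When `x n = n x*`, the element `x n` is itself symmetric, so the dichotomy applied to it
collapses to `x n` commuting with `n`. -/
theorem commute_of_map_eq_neg_one_of_normal (h2 : (2 : F) ≠ 0)
    (hanti : ∀ g h : G, st (g * h) = st h * st g)
    (hhom : ∀ g h : G, σ (g * h) = σ g * σ h) (hker : ∀ g : G, σ (g * st g) = 1)
    (hnormal : ∀ α : MonoidAlgebra F G, α * oinvMap st σ α = oinvMap st σ α * α)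
    {n x : G} (hn : σ n = 1) (hsn : st n = n) (hx : σ x = -1) : Commute x n := by
  rcases mul_eq_mul_or_mul_eq_mul_star_of_normal h2 hhom hker hnormal hn hsn hx with h | h
  · exact h
  have hxn : σ (x * n) = -1 := by rw [hhom, hx, hn, mul_one]
  have hsxn : st (x * n) = x * n := by rw [hanti, hsn, ← h]
  have hcomm : Commute (x * n) n := by
    rcases mul_eq_mul_or_mul_eq_mul_star_of_normal h2 hhom hker hnormal hn hsn hxn with h' | h'
    · exact h'
    · rwa [hsxn] at h'
  simpa using hcomm.mul_left (Commute.refl n).inv_left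

end OrientedInvolution

theorem stmt_12_general {F G : Type*} [Field F] [Group G] (h2 : (2 : F) ≠ 0)
    (st : G → G) (hanti : ∀ g h : G, st (g * h) = st h * st g)
    (σ : G → F) (hhom : ∀ g h : G, σ (g * h) = σ g * σ h)
    (hval : ∀ g : G, σ g = 1 ∨ σ g = -1)
    (hnt : ∃ g : G, σ g = -1)
    (hker : ∀ g : G, σ (g * st g) = 1)
    (hnormal : ∀ α : MonoidAlgebra F G, α * oinvMap st σ α = oinvMap st σ α * α) :
    ∀ n : G, σ n = 1 → st n = n → n ∈ Subgroup.center G := by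
  intro n hn hsn
  have hcomm {x : G} (hx : σ x = -1) : Commute x n :=
    commute_of_map_eq_neg_one_of_normal h2 hanti hhom hker hnormal hn hsn hx
  refine Subgroup.mem_center_iff.mpr fun g => Commute.eq ?_
  rcases hval g with hg | hg
  · obtain ⟨t, ht⟩ := hnt
    have htg : σ (t * g) = -1 := by rw [hhom, ht, hg, mul_one]
    simpa using (hcomm ht).inv_left.mul_left (hcomm htg)
  · exact hcomm hg

theorem stmt_12 {F G : Type*} [Field F] [Group G] (h2 : (2 : F) ≠ 0)
    (st : G → G) (hanti : ∀ g h : G, st (g * h) = st h * st g)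
    (hinvol : ∀ g : G, st (st g) = g)
    (σ : G → F) (hhom : ∀ g h : G, σ (g * h) = σ g * σ h)
    (hval : ∀ g : G, σ g = 1 ∨ σ g = -1)
    (hnt : ∃ g : G, σ g = -1)
    (hker : ∀ g : G, σ (g * st g) = 1)
    (hnormal : ∀ α : MonoidAlgebra F G, α * oinvMap st σ α = oinvMap st σ α * α) :
    ∀ n : G, σ n = 1 → st n = n → n ∈ Subgroup.center G :=
  stmt_12_general h2 st hanti σ hhom hval hnt hker hnormal
end
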